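/- Consider the 2×2 game with payoff matrices a = [[2,0],[4,1]] and b = [[2,1],[4,3]]. (1) There exists a 2×2 matrix P with positive entries summing to 1 such that f_1(P) = f_2(P) = 0 (the game has dependency equilibria). (2) Every such P satisfies p_{11}p_{22} ≠ p_{12}p_{21}; in particular, the game has no totally mixed Nash equilibrium even though dependency equilibria exist. -/
import Mathlib

/-- The `2 × 2` game with payoff matrices `a = [[2,0],[4,1]]`
and `b = [[2,1],[4,3]]` has dependency equilibria, but every dependency
equilibrium has rank two; in particular the game has no totally mixed Nash
equilibrium. -/
theorem disconnected_game_dependency_but_no_nash :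
    (∃ p11 p12 p21 p22 : ℝ,
      (0 < p11 ∧ 0 < p12 ∧ 0 < p21 ∧ 0 < p22) ∧
      p11 + p12 + p21 + p22 = 1 ∧
      (p11 + p12) * (4 * p21 + 1 * p22)
        - (2 * p11 + 0 * p12) * (p21 + p22) = 0 ∧
      (p11 + p21) * (1 * p12 + 3 * p22)
        - (2 * p11 + 4 * p21) * (p12 + p22) = 0) ∧
    (∀ p11 p12 p21 p22 : ℝ,
      (0 < p11 ∧ 0 < p12 ∧ 0 < p21 ∧ 0 < p22) →
      p11 + p12 + p21 + p22 = 1 →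
      (p11 + p12) * (4 * p21 + 1 * p22)
        - (2 * p11 + 0 * p12) * (p21 + p22) = 0 →
      (p11 + p21) * (1 * p12 + 3 * p22)
        - (2 * p11 + 4 * p21) * (p12 + p22) = 0 →
      p11 * p22 ≠ p12 * p21) := by
  constructor
  · exact ⟨11/24, 5/24, 1/24, 7/24, by norm_num, by norm_num, by norm_num, by norm_num⟩
  · rintro p11 p12 p21 p22 ⟨h1, h2, h3, h4⟩ hsum hf1 hf2 heq
    nlinarith [mul_pos h1 h2, mul_pos h2 h3, mul_pos h3 h4, mul_pos h1 h4]
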